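/- Let N be even and A = ∑_{odd i ≤ N−1} z_i(e_{i,i'−1} − e_{i+1,i'}) with z_i z_{i'−1} = −q^{−N+2} for odd i ≤ N/2 (and the constraint extended symmetrically). Then A² = −q^{−N+2}·id, so A satisfies (A − i q^{−N/2+1})(A + i q^{−N/2+1}) = 0. -/

import Mathlib

/-! `Amat N z` is a monomial matrix: row `a` has its only nonzero entry in column `σ a`, where
`σ` is an involution of `Fin N` when `N` is even. The square of such a matrix is diagonal, with
entries `A a (σ a) * A (σ a) a`, and each of these is a product `z i * z (N - i)` with `i` odd. -/

open Matrix

/-- The orthogonal T4 quantum point `A = ∑_{odd i ≤ N−1} z_i (e_{i,i'−1} − e_{i+1,i'})`,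
`i' = N+1−i`, written with 0-based row index `a`: for `a` even, entry `z_{a+1}` in column
`b` with `a + b + 2 = N`; for `a` odd, entry `−z_a` in column `b` with `a + b = N`
(indices of `z` are the 1-based odd `i`). -/
noncomputable def Amat (N : ℕ) (z : ℕ → ℂ) : Matrix (Fin N) (Fin N) ℂ :=
  Matrix.of fun a b =>
    if (a : ℕ) % 2 = 0 ∧ (a : ℕ) + (b : ℕ) + 2 = N then z ((a : ℕ) + 1)
    else if (a : ℕ) % 2 = 1 ∧ (a : ℕ) + (b : ℕ) = N then -z (a : ℕ)
    else 0

theorem Matrix.mul_self_eq_diagonal_of_involutive {n R : Type*} [Fintype n] [DecidableEq n]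
    [NonUnitalNonAssocSemiring R] {M : Matrix n n R} {σ : n → n} (hσ : Function.Involutive σ)
    (hM : ∀ a b, b ≠ σ a → M a b = 0) :
    M * M = diagonal fun a => M a (σ a) * M (σ a) a := by
  ext a c
  rw [mul_apply, Finset.sum_eq_single (σ a) (fun b _ hb => by rw [hM a b hb, zero_mul])
    (fun h => absurd (Finset.mem_univ _) h)]
  obtain rfl | hca := eq_or_ne c a
  · rw [diagonal_apply_eq]
  · rw [diagonal_apply_ne _ hca.symm, hM (σ a) c (by rwa [hσ a]), mul_zero]

namespace Amat

variable {N : ℕ}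

def partner (N : ℕ) (a : Fin N) : Fin N :=
  ⟨if (a : ℕ) % 2 = 0 then N - a - 2 else N - a, by split_ifs <;> omega⟩

theorem partner_involutive (hN : Even N) : Function.Involutive (partner N) := by
  obtain ⟨n, rfl⟩ := hN
  intro a
  have := a.isLt
  ext
  simp only [partner]
  split_ifs <;> omega

theorem apply_eq_zero_of_ne_partner (hN : Even N) (z : ℕ → ℂ) {a b : Fin N}
    (hb : b ≠ partner N a) : Amat N z a b = 0 := by
  obtain ⟨n, rfl⟩ := hN
  have := a.isLt
  rw [Ne, Fin.ext_iff] at hb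
  simp only [partner] at hb
  simp only [Amat, of_apply]
  split_ifs at hb ⊢ <;> first | rfl | omega

theorem apply_partner_mul_apply (hN : Even N) {z : ℕ → ℂ} {c : ℂ}
    (hz : ∀ i j : ℕ, i % 2 = 1 → i + j = N → z i * z j = c) (a : Fin N) :
    Amat N z a (partner N a) * Amat N z (partner N a) a = c := by
  obtain ⟨n, rfl⟩ := hN
  have := a.isLt
  simp only [Amat, of_apply]
  rcases Nat.mod_two_eq_zero_or_one a with ha | ha
  · rw [show (partner (n + n) a : ℕ) = n + n - a - 2 from if_pos ha]
    have hpar : (n + n - a - 2) % 2 = 0 := by omega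
    rw [if_pos ⟨ha, by omega⟩, if_pos ⟨hpar, by omega⟩, hz _ _ (by omega) (by omega)]
  · rw [show (partner (n + n) a : ℕ) = n + n - a from if_neg (by omega)]
    have hpar : (n + n - a) % 2 = 1 := by omega
    rw [if_neg (by omega), if_pos ⟨ha, by omega⟩, if_neg (by omega), if_pos ⟨hpar, by omega⟩,
      neg_mul_neg, hz _ _ ha (by omega)]

theorem mul_self (hN : Even N) {z : ℕ → ℂ} {c : ℂ}
    (hz : ∀ i j : ℕ, i % 2 = 1 → i + j = N → z i * z j = c) :
    Amat N z * Amat N z = c • 1 := by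
  rw [mul_self_eq_diagonal_of_involutive (partner_involutive hN)
    (fun _ _ => apply_eq_zero_of_ne_partner hN z), smul_one_eq_diagonal]
  exact congrArg diagonal (funext (apply_partner_mul_apply hN hz))

end Amat

theorem orthogonal_T4_point_general (N : ℕ) (hN : Even N) (q : ℂ) (z : ℕ → ℂ)
    (hz : ∀ i j : ℕ, i % 2 = 1 → i + j = N → z i * z j = -q ^ (-(N : ℤ) + 2)) :
    Amat N z * Amat N z = (-q ^ (-(N : ℤ) + 2)) • (1 : Matrix (Fin N) (Fin N) ℂ) :=
  Amat.mul_self hN hz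

/-- For even `N` and `z_i z_{N−i} = −q^{−N+2}` (odd `i`), the orthogonal T4 quantum point
satisfies `A² = −q^{−N+2}·1`, i.e. `(A − i q^{−N/2+1})(A + i q^{−N/2+1}) = 0`. -/
theorem orthogonal_T4_point (N : ℕ) (hN : Even N) (q : ℂ) (hq : q ≠ 0) (z : ℕ → ℂ)
    (hz : ∀ i j : ℕ, i % 2 = 1 → i + j = N → z i * z j = -q ^ (-(N : ℤ) + 2)) :
    Amat N z * Amat N z = (-q ^ (-(N : ℤ) + 2)) • (1 : Matrix (Fin N) (Fin N) ℂ) :=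
  orthogonal_T4_point_general N hN q z hz
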